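/- The function HGP is monotone decreasing in its second argument: for every n : ℕ and all b c : ℕ → Bool with b ≤ c (pointwise, false < true), HGP n c ≤ HGP n b. That is, for any failure pattern, replacing failed requests by successful ones cannot increase the time complexity of the GP algorithm. -/

import Mathlib

/-!
Strong induction on `n`. The only case that is not a direct application of the induction
hypothesis is a first request that fails under `b` but succeeds under `c`. It is handled by
`HGP_split_le`: after a success, each of the two halves, `⌈n/2⌉` processors on the odd and
`⌊n/2⌋` on the even subsequence, finishes no later than all `n` processors would on the whole
pattern; so a success at the front never costs more than a failure.
-/

def tailSeq (b : ℕ → Bool) : ℕ → Bool := fun i => b (i+1)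
def oddSeq (b : ℕ → Bool) : ℕ → Bool := fun i => b (2*i)
def evenSeq (b : ℕ → Bool) : ℕ → Bool := fun i => b (2*i+1)

/-- Time complexity of the GP algorithm with `n` uninformed processors under
failure pattern `b` (`b i = true` means the `i`-th request is successful). -/
def HGP : ℕ → (ℕ → Bool) → ℕ
  | 0, _ => 0
  | n+1, b =>
    if b 0 then
      1 + max (HGP ((n+1)/2) (oddSeq (tailSeq b))) (HGP (n/2) (evenSeq (tailSeq b)))
    else
      1 + HGP n (tailSeq b)
decreasing_by all_goals omega

theorem tailSeq_mono : Monotone tailSeq := fun _ _ h i => h (i + 1)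

theorem oddSeq_mono : Monotone oddSeq := fun _ _ h i => h (2 * i)

theorem evenSeq_mono : Monotone evenSeq := fun _ _ h i => h (2 * i + 1)

theorem tailSeq_oddSeq (t : ℕ → Bool) : tailSeq (oddSeq t) = evenSeq (tailSeq t) := by
  funext i
  simp only [tailSeq, oddSeq, evenSeq]
  congr 1

theorem evenSeq_eq_oddSeq_tailSeq (t : ℕ → Bool) : evenSeq t = oddSeq (tailSeq t) := rfl

theorem HGP_zero (b : ℕ → Bool) : HGP 0 b = 0 := by
  rw [HGP]

theorem HGP_succ_of_true {b : ℕ → Bool} (hb : b 0 = true) (n : ℕ) :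
    HGP (n + 1) b =
      1 + max (HGP ((n + 1) / 2) (oddSeq (tailSeq b))) (HGP (n / 2) (evenSeq (tailSeq b))) := by
  rw [HGP, if_pos hb]

theorem HGP_succ_of_false {b : ℕ → Bool} (hb : b 0 = false) (n : ℕ) :
    HGP (n + 1) b = 1 + HGP n (tailSeq b) := by
  rw [HGP, if_neg (by simp [hb])]

theorem HGP_split_le (n : ℕ) (t : ℕ → Bool) :
    max (HGP ((n + 1) / 2) (oddSeq t)) (HGP (n / 2) (evenSeq t)) ≤ HGP n t := by
  induction n using Nat.strong_induction_on generalizing t with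
  | _ n ih =>
  rcases n with _ | m
  · simp [HGP_zero]
  have hhalf : (m + 1 + 1) / 2 = m / 2 + 1 := by omega
  rw [hhalf, evenSeq_eq_oddSeq_tailSeq]
  cases ht : t 0
  · have hodd : oddSeq t 0 = false := ht
    rw [HGP_succ_of_false ht, HGP_succ_of_false hodd, tailSeq_oddSeq]
    have ih_m := ih m m.lt_succ_self (tailSeq t)
    omega
  · have hodd : oddSeq t 0 = true := ht
    rw [HGP_succ_of_true ht, HGP_succ_of_true hodd, tailSeq_oddSeq]
    have ih_half := ih (m / 2) (by omega) (evenSeq (tailSeq t))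
    omega

theorem HGP_succ_ge (n : ℕ) (b : ℕ → Bool) :
    1 + max (HGP ((n + 1) / 2) (oddSeq (tailSeq b))) (HGP (n / 2) (evenSeq (tailSeq b)))
      ≤ HGP (n + 1) b := by
  cases hb : b 0
  · rw [HGP_succ_of_false hb]
    exact Nat.add_le_add_left (HGP_split_le n (tailSeq b)) 1
  · rw [HGP_succ_of_true hb]

/-- `HGP` is monotone decreasing in the failure pattern: replacing failed
requests by successful ones cannot increase the time complexity. -/
theorem hgp_antitone_pattern (n : ℕ) (b c : ℕ → Bool) (hbc : b ≤ c) :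
    HGP n c ≤ HGP n b := by
  induction n using Nat.strong_induction_on generalizing b c with
  | _ n ih =>
  rcases n with _ | m
  · simp [HGP_zero]
  have htail : tailSeq b ≤ tailSeq c := tailSeq_mono hbc
  cases hc : c 0
  · have hb : b 0 = false := Bool.eq_false_of_le_false (hc ▸ hbc 0)
    rw [HGP_succ_of_false hc, HGP_succ_of_false hb]
    exact Nat.add_le_add_left (ih m m.lt_succ_self _ _ htail) 1
  · calc HGP (m + 1) c
        = 1 + max (HGP ((m + 1) / 2) (oddSeq (tailSeq c)))
            (HGP (m / 2) (evenSeq (tailSeq c))) := HGP_succ_of_true hc m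
      _ ≤ 1 + max (HGP ((m + 1) / 2) (oddSeq (tailSeq b)))
            (HGP (m / 2) (evenSeq (tailSeq b))) := by
        gcongr 1 + max ?_ ?_
        · exact ih _ (by omega) _ _ (oddSeq_mono htail)
        · exact ih _ (by omega) _ _ (evenSeq_mono htail)
      _ ≤ HGP (m + 1) b := HGP_succ_ge m b
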